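/- For W(x) = 1/(1 + |x|/2) on ℝ³, the energy E[W] := (1/2)∫|∇W|² dx − (1/4)∫|x|⁻¹W⁴ dx equals 2π/3. -/

import Mathlib

/-!
`W` is radial with profile `w r = (1 + r / 2)⁻¹`, and `w' = -w² / 2` gives `|∇W|² = w⁴ / 4`
away from the origin. In polar coordinates both integrals become one-dimensional, and since
`r w = 2 (1 - w)` their radial integrands are `w² (1 - w)²` and `w² · 2 w (1 - w)`.
As `w² = -2 w'`, this turns each into `-2 (P ∘ w)'` for a polynomial `P` with `P 0 = 0`,
so both equal `2 P 1 = 2 / 3`. With the factor `4π` of the unit sphere,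
`E[W] = ½ · 8π/3 - ¼ · 8π/3 = 2π/3`.
-/

open MeasureTheory Real Set Filter Topology

noncomputable section

abbrev E3 := EuclideanSpace ℝ (Fin 3)

def W (x : E3) : ℝ := (1 + ‖x‖ / 2)⁻¹

def energy (u : E3 → ℝ) : ℝ :=
  (1 / 2) * (∫ x : E3, ‖gradient u x‖ ^ 2) - (1 / 4) * (∫ x : E3, ‖x‖⁻¹ * |u x| ^ 4)

theorem norm_gradient_comp_norm {F : Type*} [NormedAddCommGroup F] [InnerProductSpace ℝ F]
    [CompleteSpace F] {f : ℝ → ℝ} {f' : ℝ} {x : F} (hx : x ≠ 0) (hf : HasDerivAt f f' ‖x‖) :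
    ‖gradient (fun y => f ‖y‖) x‖ = |f'| := by
  have : Nontrivial F := ⟨⟨x, 0, hx⟩⟩
  have hnorm : DifferentiableAt ℝ (‖·‖) x := (contDiffAt_norm ℝ hx).differentiableAt one_ne_zero
  have hfd : HasFDerivAt (fun y : F => f ‖y‖) (f' • fderiv ℝ (‖·‖) x) x :=
    hf.comp_hasFDerivAt x hnorm.hasFDerivAt
  rw [gradient, LinearIsometryEquiv.norm_map, hfd.fderiv, norm_smul,
    norm_fderiv_norm hnorm, mul_one, Real.norm_eq_abs]

theorem integral_comp_norm_fin_three (f : ℝ → ℝ) :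
    ∫ x : E3, f ‖x‖ = 4 * π * ∫ r in Ioi 0, r ^ 2 * f r := by
  rw [integral_fun_norm_addHaar volume f, finrank_euclideanSpace_fin, measureReal_def,
    EuclideanSpace.volume_ball_fin_three, ENNReal.ofReal_one, one_pow, one_mul,
    ENNReal.toReal_ofReal (by positivity), nsmul_eq_mul, smul_eq_mul]
  simp only [smul_eq_mul]
  ring

def radialW (r : ℝ) : ℝ := (1 + r / 2)⁻¹

theorem W_eq_radialW_comp_norm : W = fun x => radialW ‖x‖ := rfl

section radialW

variable {r : ℝ}

theorem radialW_pos (hr : -2 < r) : 0 < radialW r := by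
  unfold radialW
  have : 0 < 1 + r / 2 := by linarith
  positivity

theorem radialW_le_one (hr : 0 ≤ r) : radialW r ≤ 1 :=
  inv_le_one_of_one_le₀ (by linarith)

theorem mul_radialW (hr : r ≠ -2) : r * radialW r = 2 * (1 - radialW r) := by
  have : 2 + r ≠ 0 := fun h => hr (by linarith)
  unfold radialW
  field_simp
  ring

theorem hasDerivAt_radialW (hr : r ≠ -2) :
    HasDerivAt radialW (-(1 / 2) * radialW r ^ 2) r := by
  have : 1 + r / 2 ≠ 0 := fun h => hr (by linarith)
  refine ((((hasDerivAt_id r).div_const 2).const_add 1).inv this).congr_deriv ?_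
  simp only [radialW, id, inv_pow]
  ring

theorem tendsto_radialW_atTop : Tendsto radialW atTop (𝓝 0) :=
  tendsto_inv_atTop_zero.comp
    (tendsto_atTop_add_const_left _ 1 (tendsto_id.atTop_div_const two_pos))

end radialW

theorem integral_comp_radialW_mul_sq {P p : ℝ → ℝ} (hP : ∀ v, HasDerivAt P (p v) v)
    (hP0 : P 0 = 0) (hp : ∀ v ∈ Icc (0 : ℝ) 1, 0 ≤ p v) :
    ∫ r in Ioi 0, p (radialW r) * radialW r ^ 2 = 2 * P 1 := by
  have hderiv : ∀ r ∈ Ici (0 : ℝ),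
      HasDerivAt (fun s => -2 * P (radialW s)) (p (radialW r) * radialW r ^ 2) r := by
    intro r hr
    refine (((hP _).comp r (hasDerivAt_radialW ?_)).const_mul (-2)).congr_deriv (by ring)
    linarith [mem_Ici.mp hr]
  have hnonneg : ∀ r ∈ Ioi (0 : ℝ), 0 ≤ p (radialW r) * radialW r ^ 2 := fun r hr =>
    mul_nonneg (hp _ ⟨(radialW_pos (by linarith [mem_Ioi.mp hr])).le,
      radialW_le_one (mem_Ioi.mp hr).le⟩) (sq_nonneg _)
  have hlim : Tendsto (fun s => -2 * P (radialW s)) atTop (𝓝 0) := by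
    simpa [hP0] using
      (((hP 0).continuousAt.tendsto).comp tendsto_radialW_atTop).const_mul (-2)
  rw [integral_Ioi_of_hasDerivAt_of_nonneg' hderiv hnonneg hlim]
  simp [radialW]

theorem integral_sq_mul_radialW_pow_four :
    ∫ r in Ioi 0, r ^ 2 * (radialW r ^ 4 / 4) = 2 / 3 := by
  have hP : ∀ v : ℝ, HasDerivAt (fun v => (1 - (1 - v) ^ 3) / 3) ((1 - v) ^ 2) v := by
    intro v
    refine ((((hasDerivAt_id v).const_sub 1).pow 3 |>.const_sub 1).div_const 3).congr_deriv ?_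
    simp only [id]
    ring
  have hcongr : ∀ r ∈ Ioi (0 : ℝ),
      r ^ 2 * (radialW r ^ 4 / 4) = (1 - radialW r) ^ 2 * radialW r ^ 2 := by
    intro r hr
    linear_combination (radialW r ^ 2 / 4 * (r * radialW r + 2 * (1 - radialW r)))
      * mul_radialW (r := r) (by linarith [mem_Ioi.mp hr])
  rw [setIntegral_congr_fun measurableSet_Ioi hcongr,
    integral_comp_radialW_mul_sq hP (by norm_num) fun v _ => sq_nonneg _]
  norm_num

theorem integral_sq_mul_inv_mul_radialW_pow_four :
    ∫ r in Ioi 0, r ^ 2 * (r⁻¹ * radialW r ^ 4) = 2 / 3 := by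
  have hP : ∀ v : ℝ, HasDerivAt (fun v => v ^ 2 - 2 / 3 * v ^ 3) (2 * v * (1 - v)) v := by
    intro v
    refine ((hasDerivAt_pow 2 v).sub ((hasDerivAt_pow 3 v).const_mul (2 / 3))).congr_deriv ?_
    ring
  have hcongr : ∀ r ∈ Ioi (0 : ℝ),
      r ^ 2 * (r⁻¹ * radialW r ^ 4) = 2 * radialW r * (1 - radialW r) * radialW r ^ 2 := by
    intro r hr
    have hr0 : r ≠ 0 := (mem_Ioi.mp hr).ne'
    rw [← mul_assoc, sq, mul_assoc r, mul_inv_cancel₀ hr0, mul_one]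
    linear_combination radialW r ^ 3 * mul_radialW (r := r) (by linarith [mem_Ioi.mp hr])
  rw [setIntegral_congr_fun measurableSet_Ioi hcongr,
    integral_comp_radialW_mul_sq hP (by norm_num) fun v hv =>
      mul_nonneg (by linarith [hv.1]) (sub_nonneg.mpr hv.2)]
  norm_num

theorem integral_norm_gradient_W_sq : ∫ x : E3, ‖gradient W x‖ ^ 2 = 8 * π / 3 := by
  have hae : (fun x : E3 => ‖gradient W x‖ ^ 2) =ᵐ[volume] fun x => radialW ‖x‖ ^ 4 / 4 := by
    filter_upwards [measure_singleton (0 : E3) |> compl_mem_ae_iff.mpr] with x hx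
    rw [W_eq_radialW_comp_norm,
      norm_gradient_comp_norm hx (hasDerivAt_radialW (by linarith [norm_nonneg x])), sq_abs]
    ring
  rw [integral_congr_ae hae, integral_comp_norm_fin_three (fun r => radialW r ^ 4 / 4),
    integral_sq_mul_radialW_pow_four]
  ring

theorem integral_inv_norm_mul_W_pow_four : ∫ x : E3, ‖x‖⁻¹ * |W x| ^ 4 = 8 * π / 3 := by
  have habs : ∀ x : E3, |W x| = radialW ‖x‖ := fun x =>
    abs_of_pos (radialW_pos (by linarith [norm_nonneg x]))
  simp_rw [habs]
  rw [integral_comp_norm_fin_three (fun r => r⁻¹ * radialW r ^ 4),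
    integral_sq_mul_inv_mul_radialW_pow_four]
  ring

theorem stmt_2 : energy W = 2 * π / 3 := by
  rw [energy, integral_norm_gradient_W_sq, integral_inv_norm_mul_W_pow_four]
  ring
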